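/- Let r ≥ 1 be an integer, let κ < (ln 2)/r be a nonnegative real, and let (σ_k)_{k≥0} be a sequence of nonnegative reals satisfying σ_k ≤ Σ_{ℓ=0}^{k-1} (rκ)^{k-ℓ}/(k-ℓ)! · σ_ℓ for all k ≥ 1. If δ ∈ (0,1) satisfies κ < δ·(ln 2)/r, then σ_k ≤ σ_0·δ^k for all k ≥ 0. -/

import Mathlib

/-!
Guess `σ k ≤ σ 0 * δ ^ k` and verify it by strong induction: substituting the guess into the
recurrence leaves `δ ^ k` times `∑_{j=1}^{k} x ^ j / j!` with `x = r κ / δ < ln 2`, and this sum is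
below `exp x - 1 < 1`.
-/

open Finset

theorem le_mul_pow_of_le_sum_range {c σ : ℕ → ℝ} {δ : ℝ} (hc : ∀ j, 0 ≤ c j) (hσ0 : 0 ≤ σ 0)
    (hpow : ∀ k, ∑ ℓ ∈ range k, c (k - ℓ) * δ ^ ℓ ≤ δ ^ k)
    (hrec : ∀ k, 1 ≤ k → σ k ≤ ∑ ℓ ∈ range k, c (k - ℓ) * σ ℓ) (k : ℕ) :
    σ k ≤ σ 0 * δ ^ k := by
  induction k using Nat.strong_induction_on with
  | _ k ih =>
    rcases Nat.eq_zero_or_pos k with rfl | hk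
    · simp
    calc σ k ≤ ∑ ℓ ∈ range k, c (k - ℓ) * σ ℓ := hrec k hk
      _ ≤ ∑ ℓ ∈ range k, c (k - ℓ) * (σ 0 * δ ^ ℓ) :=
          sum_le_sum fun ℓ hℓ => mul_le_mul_of_nonneg_left (ih ℓ (mem_range.mp hℓ)) (hc _)
      _ = σ 0 * ∑ ℓ ∈ range k, c (k - ℓ) * δ ^ ℓ := by
          rw [mul_sum]; exact sum_congr rfl fun ℓ _ => by ring
      _ ≤ σ 0 * δ ^ k := mul_le_mul_of_nonneg_left (hpow k) hσ0

theorem sum_range_pow_sub_div_factorial_le_exp_sub_one {x : ℝ} (hx : 0 ≤ x) (k : ℕ) :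
    ∑ ℓ ∈ range k, x ^ (k - ℓ) / (k - ℓ).factorial ≤ Real.exp x - 1 := by
  have hreflect : ∑ ℓ ∈ range k, x ^ (k - ℓ) / (k - ℓ).factorial
      = ∑ j ∈ range k, x ^ (j + 1) / (j + 1).factorial := by
    rw [← sum_range_reflect]
    exact sum_congr rfl fun ℓ hℓ => by
      rw [show k - (k - 1 - ℓ) = ℓ + 1 by have := mem_range.mp hℓ; omega]
  have hshift : ∑ j ∈ range (k + 1), x ^ j / j.factorial
      = ∑ j ∈ range k, x ^ (j + 1) / (j + 1).factorial + 1 := by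
    simp [sum_range_succ']
  linarith [Real.sum_le_exp_of_nonneg hx (k + 1)]

theorem sum_range_pow_div_factorial_mul_pow_le_pow {a δ : ℝ} (ha : 0 ≤ a) (hδ : 0 < δ)
    (haδ : a ≤ δ * Real.log 2) (k : ℕ) :
    ∑ ℓ ∈ range k, a ^ (k - ℓ) / (k - ℓ).factorial * δ ^ ℓ ≤ δ ^ k := by
  set x := a / δ
  have hx : 0 ≤ x := by positivity
  have hexp : Real.exp x ≤ 2 := by
    calc Real.exp x ≤ Real.exp (Real.log 2) :=
          Real.exp_le_exp.mpr ((div_le_iff₀' hδ).mpr haδ)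
      _ = 2 := Real.exp_log two_pos
  calc ∑ ℓ ∈ range k, a ^ (k - ℓ) / (k - ℓ).factorial * δ ^ ℓ
      = δ ^ k * ∑ ℓ ∈ range k, x ^ (k - ℓ) / (k - ℓ).factorial := by
        rw [mul_sum]
        refine sum_congr rfl fun ℓ hℓ => ?_
        rw [← Nat.sub_add_cancel (mem_range.mp hℓ).le, pow_add, Nat.add_sub_cancel, div_pow]
        field_simp
    _ ≤ δ ^ k * 1 := by
        gcongr
        linarith [sum_range_pow_sub_div_factorial_le_exp_sub_one hx k]
    _ = δ ^ k := mul_one _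

theorem stmt0_general (r : ℕ) (hr : 1 ≤ r) (κ : ℝ) (hκ0 : 0 ≤ κ)
    (σ : ℕ → ℝ) (hσ : ∀ k, 0 ≤ σ k)
    (hrec : ∀ k, 1 ≤ k →
      σ k ≤ ∑ ℓ ∈ Finset.range k,
        ((r : ℝ) * κ) ^ (k - ℓ) / (Nat.factorial (k - ℓ) : ℝ) * σ ℓ)
    (δ : ℝ) (hδ : δ ∈ Set.Ioo (0 : ℝ) 1) (hκδ : κ < δ * Real.log 2 / r) :
    ∀ k, σ k ≤ σ 0 * δ ^ k := by
  have hr0 : (0 : ℝ) < r := by exact_mod_cast hr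
  have hrκ : (r : ℝ) * κ ≤ δ * Real.log 2 := by
    rw [mul_comm]; exact ((lt_div_iff₀ hr0).mp hκδ).le
  exact le_mul_pow_of_le_sum_range (c := fun j => ((r : ℝ) * κ) ^ j / j.factorial)
    (fun j => by positivity) (hσ 0)
    (sum_range_pow_div_factorial_mul_pow_le_pow (by positivity) hδ.1 hrκ) hrec

theorem stmt0 (r : ℕ) (hr : 1 ≤ r) (κ : ℝ) (hκ0 : 0 ≤ κ)
    (hκ : κ < Real.log 2 / r) (σ : ℕ → ℝ) (hσ : ∀ k, 0 ≤ σ k)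
    (hrec : ∀ k, 1 ≤ k →
      σ k ≤ ∑ ℓ ∈ Finset.range k,
        ((r : ℝ) * κ) ^ (k - ℓ) / (Nat.factorial (k - ℓ) : ℝ) * σ ℓ)
    (δ : ℝ) (hδ : δ ∈ Set.Ioo (0 : ℝ) 1) (hκδ : κ < δ * Real.log 2 / r) :
    ∀ k, σ k ≤ σ 0 * δ ^ k :=
  stmt0_general r hr κ hκ0 σ hσ hrec δ hδ hκδ
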